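/- Let φ be a formula of ML(⊻) or EMDL. Then φ is valid if and only if K,T ⊨ φ for every Kripke model K and every team T of K with |T| ≤ 2^{vrank(φ)}. -/

import Mathlib

/-- A Kripke model over a (nonempty) type `W` of worlds: an accessibility
relation `R` and a valuation `V`. -/
structure Kripke (W : Type) where
  R : W → W → Prop
  V : ℕ → Set W

/-- The image team `R[T] = {w | ∃ v ∈ T, v R w}`. -/
def Kripke.img {W : Type} (K : Kripke W) (T : Set W) : Set W :=
  {w | ∃ v ∈ T, K.R v w}

/-- `T[R]S`: every world of `T` has an `R`-successor in `S` and every world of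
`S` has an `R`-predecessor in `T`. -/
def Kripke.step {W : Type} (K : Kripke W) (T S : Set W) : Prop :=
  (∀ w ∈ T, ∃ v ∈ S, K.R w v) ∧ (∀ v ∈ S, ∃ w ∈ T, K.R w v)

/-- Formulas of modal logic `ML` in negation normal form. -/
inductive MLForm : Type
  | pos : ℕ → MLForm
  | neg : ℕ → MLForm
  | and : MLForm → MLForm → MLForm
  | or  : MLForm → MLForm → MLForm
  | dia : MLForm → MLForm
  | box : MLForm → MLForm

/-- Team semantics for `ML`. A team is a set of worlds. -/
def MLSat {W : Type} (K : Kripke W) : Set W → MLForm → Prop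
  | T, .pos p => T ⊆ K.V p
  | T, .neg p => T ∩ K.V p = ∅
  | T, .and φ ψ => MLSat K T φ ∧ MLSat K T ψ
  | T, .or φ ψ => ∃ T₁ T₂, T₁ ∪ T₂ = T ∧ MLSat K T₁ φ ∧ MLSat K T₂ ψ
  | T, .dia φ => ∃ T', K.step T T' ∧ MLSat K T' φ
  | T, .box φ => MLSat K (K.img T) φ

/-- Formulas of `ML(⊻)`: modal logic in negation normal form extended with
intuitionistic disjunction `⊻` (`idis`). -/
inductive MLIForm : Type
  | pos : ℕ → MLIForm
  | neg : ℕ → MLIForm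
  | and : MLIForm → MLIForm → MLIForm
  | or  : MLIForm → MLIForm → MLIForm
  | dia : MLIForm → MLIForm
  | box : MLIForm → MLIForm
  | idis : MLIForm → MLIForm → MLIForm

/-- Team semantics for `ML(⊻)`. -/
def MLISat {W : Type} (K : Kripke W) : Set W → MLIForm → Prop
  | T, .pos p => T ⊆ K.V p
  | T, .neg p => T ∩ K.V p = ∅
  | T, .and φ ψ => MLISat K T φ ∧ MLISat K T ψ
  | T, .or φ ψ => ∃ T₁ T₂, T₁ ∪ T₂ = T ∧ MLISat K T₁ φ ∧ MLISat K T₂ ψ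
  | T, .dia φ => ∃ T', K.step T T' ∧ MLISat K T' φ
  | T, .box φ => MLISat K (K.img T) φ
  | T, .idis φ ψ => MLISat K T φ ∨ MLISat K T ψ

/-- `vrank φ`: the number of occurrences of `⊻` in an `ML(⊻)`-formula. -/
def vrank : MLIForm → ℕ
  | .pos _ => 0
  | .neg _ => 0
  | .and φ ψ => vrank φ + vrank ψ
  | .or φ ψ => vrank φ + vrank ψ
  | .dia φ => vrank φ
  | .box φ => vrank φ
  | .idis φ ψ => vrank φ + vrank ψ + 1

/-- All tuples (lists) of `n` signs (Booleans), i.e. `{⊥,⊤}ⁿ`. -/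
def allBLists : ℕ → List (List Bool)
  | 0 => [[]]
  | n + 1 => (allBLists n).flatMap fun l => [true :: l, false :: l]

/-- `φ^⊥`: the negation normal form of `¬φ`, for an `ML`-formula `φ` in
negation normal form. -/
def MLForm.nnfNeg : MLForm → MLForm
  | .pos p => .neg p
  | .neg p => .pos p
  | .and φ ψ => .or φ.nnfNeg ψ.nnfNeg
  | .or φ ψ => .and φ.nnfNeg ψ.nnfNeg
  | .dia φ => .box φ.nnfNeg
  | .box φ => .dia φ.nnfNeg

/-- The embedding of `ML` into `ML(⊻)`. -/
def MLForm.toMLI : MLForm → MLIForm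
  | .pos p => .pos p
  | .neg p => .neg p
  | .and φ ψ => .and φ.toMLI ψ.toMLI
  | .or φ ψ => .or φ.toMLI ψ.toMLI
  | .dia φ => .dia φ.toMLI
  | .box φ => .box φ.toMLI

/-- `φ^a`: the formula `φ` if `a = ⊤` and `φ^⊥` if `a = ⊥`. -/
def mlLit (φ : MLForm) (a : Bool) : MLIForm :=
  if a then φ.toMLI else φ.nnfNeg.toMLI

/-- The conjunction `φ₁^{a₁} ∧ … ∧ φₙ^{aₙ} ∧ (ψ ⊻ ψ^⊥)`. -/
def mlDepConj (φs : List MLForm) (a : List Bool) (ψ : MLForm) : MLIForm :=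
  (List.zipWith mlLit φs a).foldr MLIForm.and
    (MLIForm.idis ψ.toMLI ψ.nnfNeg.toMLI)

/-- Big splitting disjunction `⋁` of a (nonempty) list of formulas. -/
def mlBigOr : List MLIForm → MLIForm
  | [] => .pos 0
  | [φ] => φ
  | φ :: ψ :: l => .or φ (mlBigOr (ψ :: l))

/-- The `ML(⊻)`-formula
`⋁_{a₁,…,aₙ ∈ {⊥,⊤}} (φ₁^{a₁} ∧ … ∧ φₙ^{aₙ} ∧ (ψ ⊻ ψ^⊥))`. -/
def mlDepTranslation (φs : List MLForm) (ψ : MLForm) : MLIForm :=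
  mlBigOr ((allBLists φs.length).map fun a => mlDepConj φs a ψ)

/-- Formulas of extended modal dependence logic `EMDL`: modal logic in
negation normal form extended with dependence atoms `=(φ₁,…,φₙ,ψ)` over
`ML`-formulas. -/
inductive EMDLForm : Type
  | pos : ℕ → EMDLForm
  | neg : ℕ → EMDLForm
  | and : EMDLForm → EMDLForm → EMDLForm
  | or  : EMDLForm → EMDLForm → EMDLForm
  | dia : EMDLForm → EMDLForm
  | box : EMDLForm → EMDLForm
  | dep : List MLForm → MLForm → EMDLForm

/-- Team semantics for `EMDL`. -/
def EMDLSat {W : Type} (K : Kripke W) : Set W → EMDLForm → Prop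
  | T, .pos p => T ⊆ K.V p
  | T, .neg p => T ∩ K.V p = ∅
  | T, .and φ ψ => EMDLSat K T φ ∧ EMDLSat K T ψ
  | T, .or φ ψ => ∃ T₁ T₂, T₁ ∪ T₂ = T ∧ EMDLSat K T₁ φ ∧ EMDLSat K T₂ ψ
  | T, .dia φ => ∃ T', K.step T T' ∧ EMDLSat K T' φ
  | T, .box φ => EMDLSat K (K.img T) φ
  | T, .dep φs ψ => ∀ w ∈ T, ∀ v ∈ T,
      (∀ χ ∈ φs, (MLSat K {w} χ ↔ MLSat K {v} χ)) →
      (MLSat K {w} ψ ↔ MLSat K {v} ψ)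

/-- The compositional translation of `EMDL` into `ML(⊻)`, replacing each
dependence atom `=(φ₁,…,φₙ,ψ)` by
`⋁_{a⃗ ∈ {⊥,⊤}ⁿ} (φ₁^{a₁} ∧ … ∧ φₙ^{aₙ} ∧ (ψ ⊻ ψ^⊥))`. -/
def EMDLForm.toMLI : EMDLForm → MLIForm
  | .pos p => .pos p
  | .neg p => .neg p
  | .and φ ψ => .and φ.toMLI ψ.toMLI
  | .or φ ψ => .or φ.toMLI ψ.toMLI
  | .dia φ => .dia φ.toMLI
  | .box φ => .box φ.toMLI
  | .dep φs ψ => mlDepTranslation φs ψ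

/-- `vrank` of an `EMDL`-formula: the number of `⊻`'s in its `ML(⊻)`
translation. -/
def vrankE (φ : EMDLForm) : ℕ := vrank φ.toMLI


/-!
Distributing every connective over `⊻` writes an `ML(⊻)`-formula `φ` as the `⊻`-disjunction of
at most `2 ^ vrank φ` plain `ML`-formulas, its resolutions. `ML`-formulas are flat: a team
satisfies one iff each of its worlds does. So if a team `T` falsifies `φ`, choosing for each
resolution a world of `T` falsifying it yields a subteam of size at most `2 ^ vrank φ` that still
falsifies `φ`. For `EMDL` it remains to see that the translation of `=(φ₁,…,φₙ,ψ)` is equivalent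
to it: a splitting of `T` witnessing the big disjunction can always be taken to be the partition
of `T` by the truth values of `φ₁,…,φₙ`, and `ψ ⊻ ψ^⊥` says that `ψ` is constant on each block.
-/

namespace MLForm

variable {W : Type} (K : Kripke W)

def Holds (w : W) : MLForm → Prop
  | .pos p => w ∈ K.V p
  | .neg p => w ∉ K.V p
  | .and φ ψ => Holds w φ ∧ Holds w ψ
  | .or φ ψ => Holds w φ ∨ Holds w ψ
  | .dia φ => ∃ v, K.R w v ∧ Holds v φ
  | .box φ => ∀ v, K.R w v → Holds v φ

theorem mlsat_iff_forall_holds (φ : MLForm) (T : Set W) :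
    MLSat K T φ ↔ ∀ w ∈ T, φ.Holds K w := by
  induction φ generalizing T with
  | pos p => rfl
  | neg p => simp [MLSat, Holds, Set.eq_empty_iff_forall_notMem]
  | and φ ψ ihφ ihψ => simp only [MLSat, Holds, ihφ, ihψ, ← forall₂_and]
  | or φ ψ ihφ ihψ =>
    simp only [MLSat, Holds, ihφ, ihψ]
    constructor
    · rintro ⟨T₁, T₂, rfl, h₁, h₂⟩ w (hw | hw)
      exacts [.inl (h₁ w hw), .inr (h₂ w hw)]
    · intro h
      refine ⟨{w ∈ T | φ.Holds K w}, {w ∈ T | ψ.Holds K w}, ?_, fun w hw => hw.2, fun w hw => hw.2⟩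
      ext w
      simp only [Set.mem_union, Set.mem_sep_iff, ← and_or_left, and_iff_left_iff_imp]
      exact h w
  | dia φ ih =>
    simp only [MLSat, Holds, ih]
    constructor
    · rintro ⟨T', ⟨hsucc, -⟩, h⟩ w hw
      obtain ⟨v, hv, hwv⟩ := hsucc w hw
      exact ⟨v, hwv, h v hv⟩
    · intro h
      refine ⟨{v | ∃ w ∈ T, K.R w v ∧ φ.Holds K v}, ⟨fun w hw => ?_, ?_⟩, ?_⟩
      · obtain ⟨v, hwv, hv⟩ := h w hw
        exact ⟨v, ⟨w, hw, hwv, hv⟩, hwv⟩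
      · rintro v ⟨w, hw, hwv, -⟩
        exact ⟨w, hw, hwv⟩
      · rintro v ⟨-, -, -, hv⟩
        exact hv
  | box φ ih =>
    simp only [MLSat, Holds, ih, Kripke.img, Set.mem_ofPred_eq, forall_exists_index, and_imp]
    exact ⟨fun h w hw v hwv => h v w hw hwv, fun h v w hw hwv => h w hw v hwv⟩

@[simp]
theorem mlsat_singleton_iff (φ : MLForm) (w : W) : MLSat K {w} φ ↔ φ.Holds K w := by
  simp [mlsat_iff_forall_holds]

@[simp]
theorem holds_nnfNeg (φ : MLForm) (w : W) : φ.nnfNeg.Holds K w ↔ ¬ φ.Holds K w := by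
  induction φ generalizing w with
  | and φ ψ ihφ ihψ => simp only [nnfNeg, Holds, ihφ, ihψ, not_and_or]
  | _ => simp_all [nnfNeg, Holds]

@[simp]
theorem mlisat_toMLI (φ : MLForm) (T : Set W) : MLISat K T φ.toMLI ↔ MLSat K T φ := by
  induction φ generalizing T <;> simp_all [toMLI, MLISat, MLSat]

end MLForm

namespace MLIForm

def resolutions : MLIForm → List MLForm
  | .pos p => [.pos p]
  | .neg p => [.neg p]
  | .and φ ψ => φ.resolutions.flatMap fun α => ψ.resolutions.map (.and α)
  | .or φ ψ => φ.resolutions.flatMap fun α => ψ.resolutions.map (.or α)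
  | .dia φ => φ.resolutions.map .dia
  | .box φ => φ.resolutions.map .box
  | .idis φ ψ => φ.resolutions ++ ψ.resolutions

theorem length_resolutions_le (φ : MLIForm) : φ.resolutions.length ≤ 2 ^ vrank φ := by
  induction φ with
  | pos | neg => simp [resolutions, vrank]
  | and φ ψ ihφ ihψ | or φ ψ ihφ ihψ =>
    simp only [resolutions, vrank, List.length_flatMap, List.length_map, List.map_const',
      List.sum_replicate, smul_eq_mul, pow_add]
    exact Nat.mul_le_mul ihφ ihψ
  | dia φ ih | box φ ih => simpa [resolutions, vrank] using ih
  | idis φ ψ ihφ ihψ =>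
    rw [resolutions, vrank, List.length_append, pow_succ, mul_two]
    exact Nat.add_le_add (ihφ.trans (Nat.pow_le_pow_right two_pos (Nat.le_add_right _ _)))
      (ihψ.trans (Nat.pow_le_pow_right two_pos (Nat.le_add_left _ _)))

variable {W : Type} (K : Kripke W)

theorem mlisat_iff_exists_mem_resolutions (φ : MLIForm) (T : Set W) :
    MLISat K T φ ↔ ∃ α ∈ φ.resolutions, MLSat K T α := by
  induction φ generalizing T with
  | or φ ψ ihφ ihψ =>
    simp only [MLISat, resolutions, List.mem_flatMap, List.mem_map, ihφ, ihψ]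
    constructor
    · rintro ⟨T₁, T₂, hT, ⟨α, hα, h₁⟩, β, hβ, h₂⟩
      exact ⟨.or α β, ⟨α, hα, β, hβ, rfl⟩, T₁, T₂, hT, h₁, h₂⟩
    · rintro ⟨_, ⟨α, hα, β, hβ, rfl⟩, T₁, T₂, hT, h₁, h₂⟩
      exact ⟨T₁, T₂, hT, ⟨α, hα, h₁⟩, β, hβ, h₂⟩
  | _ => aesop (add norm [resolutions, MLISat, MLSat])

theorem mlisat_of_forall_subset_encard_le (φ : MLIForm) (T : Set W)
    (h : ∀ S ⊆ T, S.encard ≤ (2 ^ vrank φ : ℕ) → MLISat K S φ) : MLISat K T φ := by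
  classical
  by_contra hT
  simp only [mlisat_iff_exists_mem_resolutions, MLForm.mlsat_iff_forall_holds, not_exists,
    not_and, not_forall] at hT
  choose g hgT hg using hT
  set S : Set W := ↑(φ.resolutions.attach.map fun α => g α.1 α.2).toFinset
  have hS : ∀ α (hα : α ∈ φ.resolutions), g α hα ∈ S := fun α hα => by
    simpa [S] using ⟨α, hα, rfl⟩
  have hST : S ⊆ T := by
    intro w hw
    obtain ⟨⟨α, hα⟩, -, rfl⟩ := List.mem_map.mp (List.mem_toFinset.mp hw)
    exact hgT α hα
  have hcard : S.encard ≤ (2 ^ vrank φ : ℕ) := by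
    rw [Set.encard_coe_eq_coe_finsetCard, Nat.cast_le]
    calc _ ≤ (φ.resolutions.attach.map fun α => g α.1 α.2).length := List.toFinset_card_le _
      _ ≤ 2 ^ vrank φ := by simpa using length_resolutions_le φ
  obtain ⟨α, hα, hSα⟩ := (mlisat_iff_exists_mem_resolutions K φ S).mp (h S hST hcard)
  exact hg α hα ((MLForm.mlsat_iff_forall_holds K α S).mp hSα _ (hS α hα))

end MLIForm

section DependenceAtoms

theorem mem_allBLists {n : ℕ} {l : List Bool} : l ∈ allBLists n ↔ l.length = n := by
  induction n generalizing l with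
  | zero => simp [allBLists]
  | succ n ih =>
    cases l with
    | nil => simp [allBLists]
    | cons b l => cases b <;> simp [allBLists, ih]

theorem nodup_allBLists (n : ℕ) : (allBLists n).Nodup := by
  induction n with
  | zero => simp [allBLists]
  | succ n ih =>
    refine List.nodup_flatMap.mpr ⟨fun l _ => by simp, ih.imp fun hne => ?_⟩
    simpa [List.disjoint_cons_left, eq_comm] using hne

theorem forall_or_forall_not_iff {α : Type*} {S : Set α} {p : α → Prop} :
    ((∀ w ∈ S, p w) ∨ ∀ w ∈ S, ¬ p w) ↔ ∀ w ∈ S, ∀ v ∈ S, (p w ↔ p v) := by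
  refine ⟨?_, fun h => ?_⟩
  · rintro (h | h) w hw v hv
    exacts [iff_of_true (h w hw) (h v hv), iff_of_false (h w hw) (h v hv)]
  · by_cases hp : ∃ w ∈ S, p w
    · obtain ⟨w, hw, hpw⟩ := hp
      exact .inl fun v hv => (h w hw v hv).mp hpw
    · push Not at hp
      exact .inr hp

variable {W : Type} (K : Kripke W)

open Classical in
noncomputable def truthVector (φs : List MLForm) (w : W) : List Bool :=
  φs.map fun χ => decide (χ.Holds K w)

theorem truthVector_eq_iff (φs : List MLForm) (w v : W) :
    truthVector K φs w = truthVector K φs v ↔ ∀ χ ∈ φs, (χ.Holds K w ↔ χ.Holds K v) := by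
  simp [truthVector, List.map_inj_left]

theorem truthVector_mem_allBLists (φs : List MLForm) (w : W) :
    truthVector K φs w ∈ allBLists φs.length := by
  simp [mem_allBLists, truthVector]

theorem mlisat_mlLit (φ : MLForm) (b : Bool) (S : Set W) :
    MLISat K S (mlLit φ b) ↔ ∀ w ∈ S, (φ.Holds K w ↔ b = true) := by
  cases b <;> simp [mlLit, MLForm.mlsat_iff_forall_holds]

theorem mlisat_mlDepConj (φs : List MLForm) (a : List Bool) (ψ : MLForm)
    (ha : a.length = φs.length) (S : Set W) :
    MLISat K S (mlDepConj φs a ψ) ↔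
      (∀ w ∈ S, truthVector K φs w = a) ∧ ∀ w ∈ S, ∀ v ∈ S, (ψ.Holds K w ↔ ψ.Holds K v) := by
  induction φs generalizing a with
  | nil =>
    obtain rfl := List.length_eq_zero_iff.mp ha
    simp [mlDepConj, truthVector, MLISat, MLForm.mlsat_iff_forall_holds, forall_or_forall_not_iff]
  | cons χ φs ih =>
    obtain ⟨b, a, rfl⟩ := List.exists_cons_of_length_eq_add_one ha
    have hconj : MLISat K S (mlDepConj (χ :: φs) (b :: a) ψ) ↔
        MLISat K S (mlLit χ b) ∧ MLISat K S (mlDepConj φs a ψ) := Iff.rfl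
    rw [hconj, ih a (by simpa using ha), mlisat_mlLit, ← and_assoc, ← forall₂_and]
    cases b <;> simp [truthVector]

theorem mlisat_mlBigOr_map_mlDepConj (φs : List MLForm) (ψ : MLForm) {L : List (List Bool)}
    (hL : L ≠ []) (hnd : L.Nodup) (hlen : ∀ a ∈ L, a.length = φs.length) (T : Set W) :
    MLISat K T (mlBigOr (L.map fun a => mlDepConj φs a ψ)) ↔
      (∀ w ∈ T, truthVector K φs w ∈ L) ∧ ∀ w ∈ T, ∀ v ∈ T,
        truthVector K φs w = truthVector K φs v → (ψ.Holds K w ↔ ψ.Holds K v) := by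
  induction L generalizing T with
  | nil => exact absurd rfl hL
  | cons a L ih =>
    have hconj := mlisat_mlDepConj K φs a ψ (hlen a List.mem_cons_self)
    rcases L with _ | ⟨b, L⟩
    · simp only [List.map_singleton, mlBigOr, hconj, List.mem_singleton]
      exact ⟨fun ⟨hT, hψ⟩ => ⟨hT, fun w hw v hv _ => hψ w hw v hv⟩,
        fun ⟨hT, hψ⟩ => ⟨hT, fun w hw v hv => hψ w hw v hv ((hT w hw).trans (hT v hv).symm)⟩⟩
    rw [List.nodup_cons] at hnd
    have ih := ih (List.cons_ne_nil b L) hnd.2 fun c hc => hlen c (.tail _ hc)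
    show (∃ T₁ T₂, T₁ ∪ T₂ = T ∧ MLISat K T₁ (mlDepConj φs a ψ) ∧
      MLISat K T₂ (mlBigOr ((b :: L).map fun a => mlDepConj φs a ψ))) ↔ _
    simp only [ih, hconj]
    constructor
    · rintro ⟨T₁, T₂, rfl, ⟨hT₁, hψ₁⟩, hT₂, hψ₂⟩
      -- since `a ∉ b :: L`, the truth vector decides which half a world lies in
      have mem_T₁ : ∀ w ∈ T₁ ∪ T₂, truthVector K φs w = a → w ∈ T₁ := by
        rintro w (hw | hw) rfl
        exacts [hw, absurd (hT₂ w hw) hnd.1]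
      have mem_T₂ : ∀ w ∈ T₁ ∪ T₂, truthVector K φs w ≠ a → w ∈ T₂ := by
        rintro w (hw | hw) ha
        exacts [absurd (hT₁ w hw) ha, hw]
      refine ⟨fun w hw => ?_, fun w hw v hv hwv => ?_⟩ <;>
        by_cases ha : truthVector K φs w = a
      · exact ha ▸ List.mem_cons_self
      · exact List.mem_cons_of_mem _ (hT₂ w (mem_T₂ w hw ha))
      · exact hψ₁ w (mem_T₁ w hw ha) v (mem_T₁ v hv (hwv ▸ ha))
      · exact hψ₂ w (mem_T₂ w hw ha) v (mem_T₂ v hv (hwv ▸ ha)) hwv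
    · rintro ⟨hT, hψ⟩
      refine ⟨{w ∈ T | truthVector K φs w = a}, {w ∈ T | truthVector K φs w ≠ a}, ?_,
        ⟨fun w hw => hw.2, fun w hw v hv => hψ w hw.1 v hv.1 (hw.2.trans hv.2.symm)⟩,
        fun w hw => (List.mem_cons.mp (hT w hw.1)).resolve_left hw.2,
        fun w hw v hv => hψ w hw.1 v hv.1⟩
      ext w
      simp only [Set.mem_union, Set.mem_sep_iff, ← and_or_left, em, and_true]

theorem mlisat_mlDepTranslation (φs : List MLForm) (ψ : MLForm) (T : Set W) :
    MLISat K T (mlDepTranslation φs ψ) ↔ ∀ w ∈ T, ∀ v ∈ T,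
      (∀ χ ∈ φs, (MLSat K {w} χ ↔ MLSat K {v} χ)) → (MLSat K {w} ψ ↔ MLSat K {v} ψ) := by
  have hne : allBLists φs.length ≠ [] :=
    List.ne_nil_of_mem (mem_allBLists.mpr (List.length_replicate (a := true)))
  rw [mlDepTranslation, mlisat_mlBigOr_map_mlDepConj K φs ψ hne (nodup_allBLists _)
    (fun a ha => mem_allBLists.mp ha)]
  simp [truthVector_mem_allBLists, truthVector_eq_iff]

theorem EMDLForm.mlisat_toMLI (φ : EMDLForm) (T : Set W) :
    MLISat K T φ.toMLI ↔ EMDLSat K T φ := by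
  induction φ generalizing T <;>
    simp_all [EMDLForm.toMLI, MLISat, EMDLSat, mlisat_mlDepTranslation]

end DependenceAtoms

/-- An `ML(⊻)`- or `EMDL`-formula `φ` is valid iff it is
satisfied by every team of size at most `2^{vrank φ}` in every Kripke
model. -/
theorem valid_iff_small_teams :
    (∀ φ : MLIForm,
      (∀ (W : Type) [Nonempty W] (K : Kripke W) (T : Set W), MLISat K T φ) ↔
      (∀ (W : Type) [Nonempty W] (K : Kripke W) (T : Set W),
        T.encard ≤ (2 ^ vrank φ : ℕ) → MLISat K T φ)) ∧
    (∀ φ : EMDLForm,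
      (∀ (W : Type) [Nonempty W] (K : Kripke W) (T : Set W), EMDLSat K T φ) ↔
      (∀ (W : Type) [Nonempty W] (K : Kripke W) (T : Set W),
        T.encard ≤ (2 ^ vrankE φ : ℕ) → EMDLSat K T φ)) := by
  refine ⟨fun φ => ⟨fun h W _ K T _ => h W K T, fun h W _ K T => ?_⟩,
    fun φ => ⟨fun h W _ K T _ => h W K T, fun h W _ K T => ?_⟩⟩
  · exact MLIForm.mlisat_of_forall_subset_encard_le K φ T fun S _ hS => h W K S hS
  · rw [← EMDLForm.mlisat_toMLI]
    exact MLIForm.mlisat_of_forall_subset_encard_le K φ.toMLI T fun S _ hS =>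
      (EMDLForm.mlisat_toMLI K φ S).mpr (h W K S hS)
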